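/- arXiv:1702.04489 — 2 statements merged into one kernel-verified Lean document; each statement's English description precedes it below -/
import Mathlib

section
/- There exists a constant c ≥ 1, depending only on d, α and λ, such that for every t ∈ (0,1] and every r > 0, c^{-1}·( t^{-d/2}·exp(−λr²/t) + t/(t^{1/2}+r)^{d+α} ) ≤ min(t^{-d/2}, t^{-d/α}) ⊓ ( t^{-d/2}·exp(−λr²/t) + min(t^{-d/α}, t/r^{d+α}) ) ≤ c·( t^{-d/2}·exp(−λr²/t) + t/(t^{1/2}+r)^{d+α} ), where a ⊓ b denotes min(a,b). In other words, on (0,1] the bound min(t^{-d/2}, t^{-d/α}) ⊓ ( t^{-d/2} e^{−λr²/t} + t^{-d/α} ⊓ t r^{−(d+α)} ) is comparable, with constants depending only on d, α, λ, to Γ_λ(t;x) + η(t;x) evaluated at |x| = r. -/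
open MeasureTheory Set ENNReal

set_option maxHeartbeats 1000000 in
/-- On (0,1], the bound
`min(t^{-d/2}, t^{-d/α}) ⊓ (t^{-d/2} e^{-λr²/t} + min(t^{-d/α}, t r^{-(d+α)}))`
is comparable, with constants depending only on d, α, λ, to
`t^{-d/2} e^{-λr²/t} + t/(t^{1/2}+r)^{d+α}`. -/
theorem stmt0 (d : ℕ) (hd : 2 ≤ d) (α lam : ℝ) (hα1 : 0 < α) (hα2 : α < 2) (hlam : 0 < lam) :
    ∃ c : ℝ, 1 ≤ c ∧ ∀ t ∈ Set.Ioc (0 : ℝ) 1, ∀ r : ℝ, 0 < r →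
      c⁻¹ * (t ^ (-(d : ℝ) / 2) * Real.exp (-lam * r ^ 2 / t)
            + t / (t ^ ((1 : ℝ) / 2) + r) ^ ((d : ℝ) + α))
          ≤ min (min (t ^ (-(d : ℝ) / 2)) (t ^ (-(d : ℝ) / α)))
              (t ^ (-(d : ℝ) / 2) * Real.exp (-lam * r ^ 2 / t)
                + min (t ^ (-(d : ℝ) / α)) (t / r ^ ((d : ℝ) + α)))
        ∧ min (min (t ^ (-(d : ℝ) / 2)) (t ^ (-(d : ℝ) / α)))
              (t ^ (-(d : ℝ) / 2) * Real.exp (-lam * r ^ 2 / t)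
                + min (t ^ (-(d : ℝ) / α)) (t / r ^ ((d : ℝ) + α)))
          ≤ c * (t ^ (-(d : ℝ) / 2) * Real.exp (-lam * r ^ 2 / t)
                + t / (t ^ ((1 : ℝ) / 2) + r) ^ ((d : ℝ) + α)) := by
  have hdα : (0:ℝ) < (d:ℝ) + α := by positivity
  have hK0 : (0:ℝ) < 2 ^ ((d:ℝ)+α) := by positivity
  have hE0 := Real.exp_pos lam
  refine ⟨2 ^ ((d:ℝ)+α) + Real.exp lam + 2, by linarith, ?_⟩
  intro t ht r hr
  obtain ⟨ht0, ht1⟩ := ht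
  set c : ℝ := 2 ^ ((d:ℝ)+α) + Real.exp lam + 2 with hcdef
  have hc0 : 0 < c := by simp only [hcdef]; linarith
  set A : ℝ := t ^ (-(d:ℝ)/2) with hAdef
  set B : ℝ := t ^ (-(d:ℝ)/α) with hBdef
  set E : ℝ := Real.exp (-lam * r ^ 2 / t) with hEdef
  set H : ℝ := t / (t ^ ((1:ℝ)/2) + r) ^ ((d:ℝ)+α) with hHdef
  set P : ℝ := t / r ^ ((d:ℝ)+α) with hPdef
  have hA0 : 0 < A := Real.rpow_pos_of_pos ht0 _
  have hB0 : 0 < B := Real.rpow_pos_of_pos ht0 _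
  have hEp : 0 < E := Real.exp_pos _
  have hE1 : E ≤ 1 := by
    rw [hEdef, Real.exp_le_one_iff]
    have h : -lam * r ^ 2 / t = -(lam * r ^ 2 / t) := by ring
    have : 0 ≤ lam * r ^ 2 / t := by positivity
    rw [h]; linarith
  have hst : 0 < t ^ ((1:ℝ)/2) := Real.rpow_pos_of_pos ht0 _
  have hsr : 0 < t ^ ((1:ℝ)/2) + r := by linarith
  have hH0 : 0 < H := by rw [hHdef]; positivity
  have hP0 : 0 < P := by rw [hPdef]; positivity
  have hG0 : 0 < A * E := by positivity
  have tdiv : ∀ e : ℝ, t / t ^ e = t ^ (1 - e) := fun e => by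
    rw [Real.rpow_sub ht0, Real.rpow_one]
  -- A ≤ B
  have hAB : A ≤ B := by
    apply Real.rpow_le_rpow_of_exponent_ge ht0 ht1
    rw [div_le_div_iff₀ hα1 (by norm_num : (0:ℝ) < 2)]
    have hd0 : (0:ℝ) ≤ (d:ℝ) := Nat.cast_nonneg d
    nlinarith
  -- H ≤ A
  have hHA : H ≤ A := by
    have h1 : (t ^ ((1:ℝ)/2)) ^ ((d:ℝ)+α) ≤ (t ^ ((1:ℝ)/2) + r) ^ ((d:ℝ)+α) :=
      Real.rpow_le_rpow hst.le (by linarith) hdα.le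
    have h2 : H ≤ t / (t ^ ((1:ℝ)/2)) ^ ((d:ℝ)+α) :=
      div_le_div_of_nonneg_left ht0.le (by positivity) h1
    have h3 : t / (t ^ ((1:ℝ)/2)) ^ ((d:ℝ)+α) = t ^ (1 - (1/2) * ((d:ℝ)+α)) := by
      rw [← Real.rpow_mul ht0.le, tdiv]
    have h4 : t ^ (1 - (1/2) * ((d:ℝ)+α)) ≤ A := by
      apply Real.rpow_le_rpow_of_exponent_ge ht0 ht1
      have hd0 : (0:ℝ) ≤ (d:ℝ) := Nat.cast_nonneg d
      linarith
    calc H ≤ t / (t ^ ((1:ℝ)/2)) ^ ((d:ℝ)+α) := h2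
      _ = _ := h3
      _ ≤ A := h4
  -- H ≤ P
  have hHP : H ≤ P := by
    apply div_le_div_of_nonneg_left ht0.le (by positivity)
    exact Real.rpow_le_rpow hr.le (by linarith) hdα.le
  -- final helper for lower bound
  have lower : ∀ X : ℝ, X ≤ c * (min (min A B) (A * E + min B P)) →
      c⁻¹ * X ≤ min (min A B) (A * E + min B P) := by
    intro X hX
    rw [inv_mul_le_iff₀ hc0]
    exact hX
  have hminAB : min A B = A := min_eq_left hAB
  rcases le_total r (t ^ ((1:ℝ)/2)) with hcase | hcase
  · -- r ≤ √t
    have hr2t : r ^ 2 ≤ t := by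
      have h1 : r ^ 2 ≤ (t ^ ((1:ℝ)/2)) ^ 2 := by nlinarith
      have h2 : (t ^ ((1:ℝ)/2)) ^ (2:ℕ) = t := by
        rw [← Real.rpow_natCast (t ^ ((1:ℝ)/2)) 2, ← Real.rpow_mul ht0.le]
        norm_num
      rw [h2] at h1; exact h1
    have hAG : A ≤ Real.exp lam * (A * E) := by
      have h1 : Real.exp lam * E = Real.exp (lam + -lam * r ^ 2 / t) := by
        rw [hEdef, ← Real.exp_add]
      have h2 : (0:ℝ) ≤ lam + -lam * r ^ 2 / t := by
        have hle : lam * r ^ 2 / t ≤ lam := by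
          rw [div_le_iff₀ ht0]; nlinarith
        have h3 : -lam * r ^ 2 / t = -(lam * r ^ 2 / t) := by ring
        rw [h3]; linarith
      have h3 : (1:ℝ) ≤ Real.exp lam * E := by
        rw [h1]; exact Real.one_le_exp h2
      nlinarith
    constructor
    · -- lower bound
      apply lower
      have h1 : A * E + H ≤ c * min A B := by
        rw [hminAB]
        have : A * E ≤ A := by nlinarith
        have hcA : 2 * A ≤ c * A := by
          have : 2 ≤ c := by simp only [hcdef]; linarith
          nlinarith
        linarith
      have h2 : A * E + H ≤ c * (A * E + min B P) := by
        have hm0 : 0 ≤ min B P := le_min hB0.le hP0.le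
        have h3 : H ≤ Real.exp lam * (A * E) := le_trans hHA hAG
        have h4 : A * E + H ≤ (1 + Real.exp lam) * (A * E) := by nlinarith
        have h5 : (1 + Real.exp lam) * (A * E) ≤ c * (A * E) := by
          have : 1 + Real.exp lam ≤ c := by simp only [hcdef]; linarith
          nlinarith
        nlinarith
      calc A * E + H ≤ min (c * min A B) (c * (A * E + min B P)) := le_min h1 h2
        _ = c * min (min A B) (A * E + min B P) := (mul_min_of_nonneg _ _ hc0.le).symm
    · -- upper bound
      have h1 : min (min A B) (A * E + min B P) ≤ A := by
        rw [hminAB]; exact min_le_left _ _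
      have h2 : A ≤ c * (A * E + H) := by
        have : Real.exp lam * (A * E) ≤ c * (A * E + H) := by
          have hecl : Real.exp lam ≤ c := by simp only [hcdef]; linarith
          nlinarith
        linarith [hAG]
      linarith
  · -- √t ≤ r
    have hrp : 0 < r ^ ((d:ℝ)+α) := Real.rpow_pos_of_pos hr _
    -- P ≤ 2^(d+α) * H
    have hPH : P ≤ 2 ^ ((d:ℝ)+α) * H := by
      have h1 : (t ^ ((1:ℝ)/2) + r) ^ ((d:ℝ)+α) ≤ 2 ^ ((d:ℝ)+α) * r ^ ((d:ℝ)+α) := by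
        rw [← Real.mul_rpow (by norm_num) hr.le]
        exact Real.rpow_le_rpow hsr.le (by linarith) hdα.le
      have h2 : t / (2 ^ ((d:ℝ)+α) * r ^ ((d:ℝ)+α)) ≤ H :=
        div_le_div_of_nonneg_left ht0.le (by positivity) h1
      have h3 : P = 2 ^ ((d:ℝ)+α) * (t / (2 ^ ((d:ℝ)+α) * r ^ ((d:ℝ)+α))) := by
        rw [hPdef]; field_simp
      rw [h3]
      nlinarith
    -- P ≤ B
    have hPB : P ≤ B := by
      have hta : t ^ ((1:ℝ)/α) ≤ r := by
        refine le_trans ?_ hcase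
        apply Real.rpow_le_rpow_of_exponent_ge ht0 ht1
        rw [div_le_div_iff₀ (by norm_num) hα1]
        linarith
      have h1 : (t ^ ((1:ℝ)/α)) ^ ((d:ℝ)+α) ≤ r ^ ((d:ℝ)+α) :=
        Real.rpow_le_rpow (Real.rpow_pos_of_pos ht0 _).le hta hdα.le
      have h2 : P ≤ t / (t ^ ((1:ℝ)/α)) ^ ((d:ℝ)+α) :=
        div_le_div_of_nonneg_left ht0.le (by positivity) h1
      have h3 : t / (t ^ ((1:ℝ)/α)) ^ ((d:ℝ)+α) = B := by
        rw [← Real.rpow_mul ht0.le, tdiv, hBdef]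
        congr 1
        field_simp
        ring
      rw [← h3]; exact h2
    have hmBP : min B P = P := min_eq_right hPB
    constructor
    · apply lower
      have h1 : A * E + H ≤ c * min A B := by
        rw [hminAB]
        have : A * E ≤ A := by nlinarith
        have hcA : 2 * A ≤ c * A := by
          have : 2 ≤ c := by simp only [hcdef]; linarith
          nlinarith
        linarith
      have h2 : A * E + H ≤ c * (A * E + min B P) := by
        rw [hmBP]
        have hc1 : 1 ≤ c := by simp only [hcdef]; linarith
        nlinarith
      calc A * E + H ≤ min (c * min A B) (c * (A * E + min B P)) := le_min h1 h2
        _ = c * min (min A B) (A * E + min B P) := (mul_min_of_nonneg _ _ hc0.le).symm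
    · have h1 : min (min A B) (A * E + min B P) ≤ A * E + P := by
        rw [hmBP]; exact min_le_right _ _
      have h2 : A * E + P ≤ c * (A * E + H) := by
        have hKc : 2 ^ ((d:ℝ)+α) ≤ c := by simp only [hcdef]; linarith
        have hc1 : 1 ≤ c := by simp only [hcdef]; linarith
        nlinarith
      linarith
end

section
/- There exists a constant C₁ = C₁(d,α) > 0 such that for every t > 0, every s with 0 < s < t, and all x, y, z ∈ ℝ^d, η(t−s; x−z)·η(s; z−y) ≤ C₁·η(t; x−y)·( η(t−s; x−z) + η(s; z−y) ). -/
open MeasureTheory Set ENNReal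

noncomputable def eta (d : ℕ) (α t : ℝ) (x : EuclideanSpace ℝ (Fin d)) : ℝ :=
  t / (t ^ ((1 : ℝ) / 2) + ‖x‖) ^ ((d : ℝ) + α)

lemma eta_nonneg (d : ℕ) (α t : ℝ) (ht : 0 ≤ t) (x : EuclideanSpace ℝ (Fin d)) :
    0 ≤ eta d α t x :=
  div_nonneg ht (Real.rpow_nonneg (add_nonneg (Real.rpow_nonneg ht _) (norm_nonneg _)) _)

lemma sqrt_subadd (a b : ℝ) (ha : 0 ≤ a) (hb : 0 ≤ b) :
    (a + b) ^ ((1:ℝ)/2) ≤ a ^ ((1:ℝ)/2) + b ^ ((1:ℝ)/2) := by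
  rw [← Real.sqrt_eq_rpow, ← Real.sqrt_eq_rpow, ← Real.sqrt_eq_rpow]
  have h1 := Real.sqrt_nonneg a
  have h2 := Real.sqrt_nonneg b
  have h3 : a + b ≤ (Real.sqrt a + Real.sqrt b) ^ 2 := by
    have := Real.sq_sqrt ha
    have := Real.sq_sqrt hb
    nlinarith [mul_nonneg h1 h2]
  calc Real.sqrt (a + b) ≤ Real.sqrt ((Real.sqrt a + Real.sqrt b) ^ 2) :=
        Real.sqrt_le_sqrt h3
    _ = Real.sqrt a + Real.sqrt b := Real.sqrt_sq (by positivity)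

lemma eta_key (d : ℕ) (α : ℝ) (hα1 : 0 < α) (t u : ℝ) (ht : 0 < t) (hu : 0 < u)
    (hut : u ≤ t) (w v : EuclideanSpace ℝ (Fin d))
    (h : t ^ ((1:ℝ)/2) + ‖w‖ ≤ 2 * (u ^ ((1:ℝ)/2) + ‖v‖)) :
    eta d α u v ≤ 2 ^ ((d:ℝ) + α) * eta d α t w := by
  set p : ℝ := (d:ℝ) + α with hp
  have hp0 : 0 < p := by positivity
  set A : ℝ := u ^ ((1:ℝ)/2) + ‖v‖ with hA
  set D : ℝ := t ^ ((1:ℝ)/2) + ‖w‖ with hD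
  have hA0 : 0 < A := by
    have := Real.rpow_pos_of_pos hu ((1:ℝ)/2)
    positivity
  have hD0 : 0 < D := by
    have := Real.rpow_pos_of_pos ht ((1:ℝ)/2)
    positivity
  have hAp : 0 < A ^ p := Real.rpow_pos_of_pos hA0 p
  have h2p : (0:ℝ) < 2 ^ p := Real.rpow_pos_of_pos (by norm_num) p
  calc eta d α u v = u / A ^ p := rfl
    _ ≤ t / A ^ p := by gcongr
    _ = 2 ^ p * (t / (2 * A) ^ p) := by
        rw [Real.mul_rpow (by norm_num) hA0.le]
        field_simp
    _ ≤ 2 ^ p * (t / D ^ p) := by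
        have hle : D ^ p ≤ (2 * A) ^ p := Real.rpow_le_rpow hD0.le h hp0.le
        exact mul_le_mul_of_nonneg_left
          (div_le_div_of_nonneg_left ht.le (Real.rpow_pos_of_pos hD0 p) hle) h2p.le
    _ = 2 ^ p * eta d α t w := rfl

/-- 3P inequality for η. -/
theorem stmt1 (d : ℕ) (hd : 2 ≤ d) (α : ℝ) (hα1 : 0 < α) (hα2 : α < 2) :
    ∃ C₁ : ℝ, 0 < C₁ ∧ ∀ t s : ℝ, 0 < s → s < t →
      ∀ x y z : EuclideanSpace ℝ (Fin d),
        eta d α (t - s) (x - z) * eta d α s (z - y)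
          ≤ C₁ * eta d α t (x - y) * (eta d α (t - s) (x - z) + eta d α s (z - y)) := by
  refine ⟨2 ^ ((d:ℝ) + α), Real.rpow_pos_of_pos (by norm_num) _, ?_⟩
  intro t s hs hst x y z
  have hts : 0 < t - s := sub_pos.mpr hst
  have ht : 0 < t := hs.trans hst
  have hsum : t ^ ((1:ℝ)/2) + ‖x - y‖ ≤
      ((t - s) ^ ((1:ℝ)/2) + ‖x - z‖) + (s ^ ((1:ℝ)/2) + ‖z - y‖) := by
    have h1 : t ^ ((1:ℝ)/2) ≤ (t - s) ^ ((1:ℝ)/2) + s ^ ((1:ℝ)/2) := by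
      have := sqrt_subadd (t - s) s hts.le hs.le
      simpa [sub_add_cancel] using this
    have h2 : ‖x - y‖ ≤ ‖x - z‖ + ‖z - y‖ := norm_sub_le_norm_sub_add_norm_sub x z y
    linarith
  have hη1 : 0 ≤ eta d α (t - s) (x - z) := eta_nonneg d α _ hts.le _
  have hη2 : 0 ≤ eta d α s (z - y) := eta_nonneg d α _ hs.le _
  have hηt : 0 ≤ eta d α t (x - y) := eta_nonneg d α _ ht.le _
  have h2p : (0:ℝ) < 2 ^ ((d:ℝ) + α) := Real.rpow_pos_of_pos (by norm_num) _
  rcases le_total (s ^ ((1:ℝ)/2) + ‖z - y‖) ((t - s) ^ ((1:ℝ)/2) + ‖x - z‖) with hBA | hAB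
  · have hkey : eta d α (t - s) (x - z) ≤ 2 ^ ((d:ℝ) + α) * eta d α t (x - y) := by
      apply eta_key d α hα1 t (t - s) ht hts (by linarith) (x - y) (x - z)
      linarith
    calc eta d α (t - s) (x - z) * eta d α s (z - y)
        ≤ (2 ^ ((d:ℝ) + α) * eta d α t (x - y)) * eta d α s (z - y) := by gcongr
      _ ≤ 2 ^ ((d:ℝ) + α) * eta d α t (x - y) *
          (eta d α (t - s) (x - z) + eta d α s (z - y)) := by
          apply mul_le_mul_of_nonneg_left (by linarith) (by positivity)
  · have hkey : eta d α s (z - y) ≤ 2 ^ ((d:ℝ) + α) * eta d α t (x - y) := by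
      apply eta_key d α hα1 t s ht hs hst.le (x - y) (z - y)
      linarith
    calc eta d α (t - s) (x - z) * eta d α s (z - y)
        ≤ eta d α (t - s) (x - z) * (2 ^ ((d:ℝ) + α) * eta d α t (x - y)) := by gcongr
      _ = 2 ^ ((d:ℝ) + α) * eta d α t (x - y) * eta d α (t - s) (x - z) := by ring
      _ ≤ 2 ^ ((d:ℝ) + α) * eta d α t (x - y) *
          (eta d α (t - s) (x - z) + eta d α s (z - y)) := by
          apply mul_le_mul_of_nonneg_left (by linarith) (by positivity)
end
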